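/- Let V be a symmetric positive definite real p×p matrix, μ ∈ ℝ^p, α ≥ 0, and let A, B be symmetric real p×p matrices. Then ∫_{ℝ^p} φ_{μ,V}(y)^{1+α} · [(y−μ)ᵀ A (y−μ)] · [(y−μ)ᵀ B (y−μ)] dy = (2π)^{−pα/2} (det V)^{−α/2} (1+α)^{−p/2−2} · [ Tr(V A) Tr(V B) + 2 Tr(V A V B) ]. -/

import Mathlib

open Matrix MeasureTheory

/-- The multivariate normal density `φ_{μ,V}(y)` on `ℝ^p`. -/
noncomputable def gaussianPdf {p : ℕ} (V : Matrix (Fin p) (Fin p) ℝ) (μ : Fin p → ℝ)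
    (y : Fin p → ℝ) : ℝ :=
  (2 * Real.pi) ^ (-(p : ℝ) / 2) * V.det ^ (-(1 : ℝ) / 2) *
    Real.exp (-(1 / 2 : ℝ) * ((y - μ) ⬝ᵥ (V⁻¹ *ᵥ (y - μ))))

/-!
A power of a Gaussian density is again a Gaussian density up to a constant:
`φ_{μ,V}^{1+α}` is a multiple of `φ_{μ,V/(1+α)}`. So it suffices to compute the fourth moment
`E[(XᵀAX)(XᵀBX)]` of a centred Gaussian vector `X` with covariance `W`. Writing `W = S Sᵀ` and
`X = S Z` with `Z` standard normal, this becomes `E[(ZᵀPZ)(ZᵀQZ)]` with `P = SᵀAS`, `Q = SᵀBS`,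
which Isserlis' identity `E[Zᵢ Zⱼ Zₖ Zₗ] = δᵢⱼδₖₗ + δᵢₖδⱼₗ + δᵢₗδⱼₖ` evaluates to
`Tr P Tr Q + Tr(PQᵀ) + Tr(PQ)`. Isserlis' identity itself follows from the independence of the
coordinates of `Z` and the one-dimensional moments `E[Z⁰] = E[Z²] = 1`, `E[Z⁴] = 3`, odd ones `0`.
-/

open Real ProbabilityTheory

theorem integrable_pow_mul_exp_neg_mul_sq {b : ℝ} (hb : 0 < b) (n : ℕ) :
    Integrable fun t : ℝ => t ^ n * exp (-b * t ^ 2) := by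
  simpa [rpow_natCast] using
    integrable_rpow_mul_exp_neg_mul_sq hb (s := n) (by linarith [n.cast_nonneg (α := ℝ)])

theorem integral_pow_mul_exp_neg_mul_sq_of_odd (b : ℝ) {n : ℕ} (hn : Odd n) :
    ∫ t : ℝ, t ^ n * exp (-b * t ^ 2) = 0 := by
  have h := integral_neg_eq_self (fun t : ℝ => t ^ n * exp (-b * t ^ 2)) volume
  simp only [hn.neg_pow, neg_sq, neg_mul, integral_neg] at h ⊢
  linarith

theorem integral_pow_mul_exp_neg_mul_sq_of_even {b : ℝ} (hb : 0 < b) {n : ℕ} (hn : Even n) :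
    ∫ t : ℝ, t ^ n * exp (-b * t ^ 2) = b ^ (-(n + 1 : ℝ) / 2) * Gamma ((n + 1) / 2) := by
  have h := integral_comp_abs (f := fun t : ℝ => t ^ n * exp (-b * t ^ 2))
  simp only [hn.pow_abs, sq_abs] at h
  have h2 := integral_rpow_mul_exp_neg_mul_rpow (p := 2) (q := n) two_pos
    (by linarith [n.cast_nonneg (α := ℝ)]) hb
  simp only [rpow_natCast, rpow_two] at h2
  rw [h, h2]
  ring

theorem gaussianPDFReal_zero_one (t : ℝ) :
    gaussianPDFReal 0 1 t = (√(2 * π))⁻¹ * exp (-(1 / 2) * t ^ 2) := by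
  simp only [gaussianPDFReal, NNReal.coe_one, mul_one, sub_zero]
  congr 2
  ring

noncomputable def gaussMoment (n : ℕ) : ℝ := ∫ t : ℝ, t ^ n * gaussianPDFReal 0 1 t

theorem integrable_pow_mul_gaussianPDFReal (n : ℕ) :
    Integrable fun t : ℝ => t ^ n * gaussianPDFReal 0 1 t := by
  simpa only [gaussianPDFReal_zero_one, mul_left_comm] using
    (integrable_pow_mul_exp_neg_mul_sq (b := 1 / 2) (by norm_num) n).const_mul (√(2 * π))⁻¹

theorem gaussMoment_eq_mul_integral (n : ℕ) :
    gaussMoment n = (√(2 * π))⁻¹ * ∫ t : ℝ, t ^ n * exp (-(1 / 2) * t ^ 2) := by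
  simp only [gaussMoment, gaussianPDFReal_zero_one, ← integral_const_mul, mul_left_comm]

theorem gaussMoment_zero : gaussMoment 0 = 1 := by
  simpa [gaussMoment] using integral_gaussianPDFReal_eq_one 0 one_ne_zero

theorem gaussMoment_of_odd {n : ℕ} (hn : Odd n) : gaussMoment n = 0 := by
  rw [gaussMoment_eq_mul_integral, integral_pow_mul_exp_neg_mul_sq_of_odd _ hn, mul_zero]

theorem gaussMoment_add_two (n : ℕ) : gaussMoment (n + 2) = (n + 1) * gaussMoment n := by
  rcases n.even_or_odd with hn | hn
  · rw [gaussMoment_eq_mul_integral, gaussMoment_eq_mul_integral, integral_pow_mul_exp_neg_mul_sq_of_even (by norm_num) hn,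
      integral_pow_mul_exp_neg_mul_sq_of_even (by norm_num) (hn.add even_two)]
    have hΓ : Gamma ((↑(n + 2) + 1) / 2) = (n + 1) / 2 * Gamma ((n + 1) / 2) := by
      rw [← Gamma_add_one (by positivity)]
      push_cast
      ring_nf
    have hb : (1 / 2 : ℝ) ^ (-(↑(n + 2) + 1 : ℝ) / 2) =
        2 * (1 / 2 : ℝ) ^ (-(n + 1 : ℝ) / 2) := by
      rw [show -(↑(n + 2) + 1 : ℝ) / 2 = -1 + -(n + 1 : ℝ) / 2 by push_cast; ring,
        rpow_add (by norm_num), rpow_neg_one]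
      norm_num
    rw [hΓ, hb]
    ring
  · rw [gaussMoment_of_odd hn, gaussMoment_of_odd (hn.add_even even_two), mul_zero]

theorem gaussMoment_one : gaussMoment 1 = 0 := gaussMoment_of_odd odd_one

theorem gaussMoment_two : gaussMoment 2 = 1 := by
  simpa [gaussMoment_zero] using gaussMoment_add_two 0

theorem gaussMoment_three : gaussMoment 3 = 0 := gaussMoment_of_odd (by decide)

theorem gaussMoment_four : gaussMoment 4 = 3 := by
  rw [gaussMoment_add_two 2, gaussMoment_two]
  norm_num

section Matrix

variable {ι R : Type*} [Fintype ι] [CommSemiring R]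

theorem dotProduct_mulVec_eq_sum (M : Matrix ι ι R) (z : ι → R) :
    z ⬝ᵥ M *ᵥ z = ∑ x : ι × ι, M x.1 x.2 * (z x.1 * z x.2) := by
  simp only [dotProduct, mulVec, Finset.mul_sum, Fintype.sum_prod_type]
  exact Finset.sum_congr rfl fun _ _ => Finset.sum_congr rfl fun _ _ => by ring

theorem mulVec_dotProduct_mulVec_mulVec (S N : Matrix ι ι R) (z : ι → R) :
    (S *ᵥ z) ⬝ᵥ N *ᵥ S *ᵥ z = z ⬝ᵥ (Sᵀ * N * S) *ᵥ z := by
  rw [← mulVec_mulVec, ← mulVec_mulVec, dotProduct_mulVec z, vecMul_transpose]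

end Matrix

section Isserlis

variable {ι : Type*} [Fintype ι]

theorem prod_gaussianPDFReal_zero_one (z : ι → ℝ) :
    ∏ m, gaussianPDFReal 0 1 (z m) =
      (2 * π) ^ (-(Fintype.card ι : ℝ) / 2) * exp (-(1 / 2) * (z ⬝ᵥ z)) := by
  have h2π : (0 : ℝ) ≤ 2 * π := by positivity
  simp only [gaussianPDFReal_zero_one, Finset.prod_mul_distrib, Finset.prod_const, ← exp_sum,
    dotProduct, Finset.mul_sum, sq, Finset.card_univ, sqrt_eq_rpow, ← rpow_neg h2π,
    ← rpow_natCast, ← rpow_mul h2π]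
  congr 2
  ring

theorem integrable_prod_gaussianPDFReal_mul_prod_pow (e : ι → ℕ) :
    Integrable fun z : ι → ℝ => (∏ m, gaussianPDFReal 0 1 (z m)) * ∏ m, z m ^ e m := by
  simp only [← Finset.prod_mul_distrib, mul_comm (gaussianPDFReal 0 1 _)]
  exact Integrable.fintype_prod fun m => integrable_pow_mul_gaussianPDFReal (e m)

theorem integral_prod_gaussianPDFReal_mul_prod_pow (e : ι → ℕ) :
    ∫ z : ι → ℝ, (∏ m, gaussianPDFReal 0 1 (z m)) * ∏ m, z m ^ e m = ∏ m, gaussMoment (e m) := by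
  simp only [← Finset.prod_mul_distrib, mul_comm (gaussianPDFReal 0 1 _)]
  rw [volume_pi, integral_fintype_prod_eq_prod (f := fun m t => t ^ e m * gaussianPDFReal 0 1 t)]
  rfl

variable [DecidableEq ι]

theorem prod_pow_ite_eq_mul (z : ι → ℝ) (i j k l : ι) :
    ∏ m, z m ^ ((if i = m then 1 else 0) + (if j = m then 1 else 0) +
        (if k = m then 1 else 0) + (if l = m then 1 else 0)) = z i * z j * z k * z l := by
  simp only [pow_add, pow_ite, pow_one, pow_zero, Finset.prod_mul_distrib, Finset.prod_ite_eq,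
    Finset.mem_univ, if_true]

theorem prod_gaussMoment_four (i j k l : ι) :
    ∏ m, gaussMoment ((if i = m then 1 else 0) + (if j = m then 1 else 0) +
        (if k = m then 1 else 0) + (if l = m then 1 else 0)) =
      (if i = j then 1 else 0) * (if k = l then 1 else 0) +
        (if i = k then 1 else 0) * (if j = l then 1 else 0) +
        (if i = l then 1 else 0) * (if j = k then 1 else 0) := by
  -- since `gaussMoment 0 = 1`, only the indices `i, j, k, l` contribute
  rw [← Finset.prod_subset (Finset.subset_univ {i, j, k, l}) fun m _ hm => by
    simp only [Finset.mem_insert, Finset.mem_singleton, not_or] at hm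
    simp [Ne.symm hm.1, Ne.symm hm.2.1, Ne.symm hm.2.2.1, Ne.symm hm.2.2.2, gaussMoment_zero]]
  by_cases hij : i = j <;> by_cases hik : i = k <;> by_cases hil : i = l <;>
    by_cases hjk : j = k <;> by_cases hjl : j = l <;> by_cases hkl : k = l <;>
    simp_all [Finset.prod_insert, eq_comm, gaussMoment_one, gaussMoment_two, gaussMoment_three,
      gaussMoment_four]
  norm_num

theorem integrable_prod_gaussianPDFReal_mul_four (i j k l : ι) :
    Integrable fun z : ι → ℝ => (∏ m, gaussianPDFReal 0 1 (z m)) * (z i * z j * z k * z l) := by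
  simpa only [prod_pow_ite_eq_mul] using integrable_prod_gaussianPDFReal_mul_prod_pow fun m =>
    (if i = m then 1 else 0) + (if j = m then 1 else 0) + (if k = m then 1 else 0) +
      (if l = m then 1 else 0)

theorem integral_prod_gaussianPDFReal_mul_four (i j k l : ι) :
    ∫ z : ι → ℝ, (∏ m, gaussianPDFReal 0 1 (z m)) * (z i * z j * z k * z l) =
      (if i = j then 1 else 0) * (if k = l then 1 else 0) +
        (if i = k then 1 else 0) * (if j = l then 1 else 0) +
        (if i = l then 1 else 0) * (if j = k then 1 else 0) := by
  simp only [← prod_pow_ite_eq_mul, integral_prod_gaussianPDFReal_mul_prod_pow,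
    prod_gaussMoment_four]

theorem sum_mul_mul_isserlis (P Q : Matrix ι ι ℝ) :
    ∑ x : (ι × ι) × (ι × ι), P x.1.1 x.1.2 * Q x.2.1 x.2.2 *
      ((if x.1.1 = x.1.2 then 1 else 0) * (if x.2.1 = x.2.2 then 1 else 0) +
        (if x.1.1 = x.2.1 then 1 else 0) * (if x.1.2 = x.2.2 then 1 else 0) +
        (if x.1.1 = x.2.2 then 1 else 0) * (if x.1.2 = x.2.1 then 1 else 0)) =
      P.trace * Q.trace + (P * Qᵀ).trace + (P * Q).trace := by
  simp only [mul_ite, mul_one, mul_zero, mul_add, Finset.sum_add_distrib, Fintype.sum_prod_type,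
    Finset.sum_ite_eq, Finset.mem_univ, ↓reduceIte, Finset.sum_ite_irrel, Finset.sum_const_zero,
    trace, diag_apply, Finset.mul_sum, Finset.sum_mul, mul_apply, transpose_apply, add_left_inj]
  exact Finset.sum_comm

theorem integral_prod_gaussianPDFReal_mul_dotProduct_mulVec_mul (P Q : Matrix ι ι ℝ) :
    ∫ z : ι → ℝ, (∏ m, gaussianPDFReal 0 1 (z m)) * ((z ⬝ᵥ P *ᵥ z) * (z ⬝ᵥ Q *ᵥ z)) =
      P.trace * Q.trace + (P * Qᵀ).trace + (P * Q).trace := by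
  have hexpand (z : ι → ℝ) :
      (∏ m, gaussianPDFReal 0 1 (z m)) * ((z ⬝ᵥ P *ᵥ z) * (z ⬝ᵥ Q *ᵥ z)) =
        ∑ x : (ι × ι) × (ι × ι), P x.1.1 x.1.2 * Q x.2.1 x.2.2 *
          ((∏ m, gaussianPDFReal 0 1 (z m)) * (z x.1.1 * z x.1.2 * z x.2.1 * z x.2.2)) := by
    rw [dotProduct_mulVec_eq_sum, dotProduct_mulVec_eq_sum, Finset.sum_mul_sum]
    simp only [Finset.mul_sum]
    rw [← Fintype.sum_prod_type']
    exact Finset.sum_congr rfl fun x _ => by ring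
  simp only [hexpand]
  rw [integral_finsetSum _ fun x _ => (integrable_prod_gaussianPDFReal_mul_four _ _ _ _).const_mul _]
  simp only [integral_const_mul, integral_prod_gaussianPDFReal_mul_four, sum_mul_mul_isserlis]

end Isserlis

section LinearChange

variable {ι : Type*} [Fintype ι] [DecidableEq ι]

theorem integral_comp_mulVec {M : Matrix ι ι ℝ} (hM : M.det ≠ 0) (f : (ι → ℝ) → ℝ) :
    ∫ z, f (M *ᵥ z) = |M.det|⁻¹ * ∫ x, f x := by
  have hemb : MeasurableEmbedding (toLin' M) :=
    (LinearMap.isClosedEmbedding_of_injective (LinearMap.ker_eq_bot.mpr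
      (mulVec_injective_of_det_ne_zero hM))).measurableEmbedding
  rw [← abs_inv, ← ENNReal.toReal_ofReal (abs_nonneg M.det⁻¹), ← smul_eq_mul,
    ← integral_smul_measure, ← Real.map_matrix_volume_pi_eq_smul_volume_pi hM, hemb.integral_map]
  rfl

open scoped MatrixOrder in
theorem Matrix.PosDef.exists_mul_transpose_eq {W : Matrix ι ι ℝ} (hW : W.PosDef) :
    ∃ S : Matrix ι ι ℝ, S.det ≠ 0 ∧ S * Sᵀ = W := by
  obtain ⟨B, rfl⟩ := CStarAlgebra.nonneg_iff_eq_star_mul_self.mp hW.posSemidef.nonneg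
  refine ⟨Bᵀ, fun h => hW.det_pos.ne' ?_, by simp [star_eq_conjTranspose]⟩
  simp_all [star_eq_conjTranspose]

end LinearChange

section GaussianPdf

variable {p : ℕ}

theorem gaussianPdf_eq_sub (V : Matrix (Fin p) (Fin p) ℝ) (μ y : Fin p → ℝ) :
    gaussianPdf V μ y = gaussianPdf V 0 (y - μ) := by
  rw [gaussianPdf, gaussianPdf, sub_zero]

theorem gaussianPdf_rpow {V : Matrix (Fin p) (Fin p) ℝ} (hV : V.PosDef) (μ y : Fin p → ℝ)
    {β : ℝ} (hβ : 0 < β) :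
    gaussianPdf V μ y ^ β = (2 * π) ^ (-(p : ℝ) * (β - 1) / 2) * V.det ^ (-(β - 1) / 2) *
      β ^ (-(p : ℝ) / 2) * gaussianPdf (β⁻¹ • V) μ y := by
  have h2π : 0 < 2 * π := by positivity
  have hdet := hV.det_pos
  have hdetβ : 0 < β⁻¹ ^ p * V.det := by positivity
  have hinv : (β⁻¹ • V)⁻¹ = β • V⁻¹ :=
    inv_eq_left_inv (by rw [smul_mul_smul, mul_inv_cancel₀ hβ.ne', nonsing_inv_mul _
      (isUnit_iff_ne_zero.mpr hdet.ne'), one_smul])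
  rw [gaussianPdf, gaussianPdf, hinv, det_smul, Fintype.card_fin, smul_mulVec, dotProduct_smul,
    smul_eq_mul, rpow_def_of_pos (by positivity)]
  simp only [rpow_def_of_pos h2π, rpow_def_of_pos hdet, rpow_def_of_pos hβ, rpow_def_of_pos hdetβ,
    ← exp_add, log_exp, log_mul (pow_pos (inv_pos.2 hβ) _).ne' hdet.ne', log_pow, log_inv]
  congr 1
  ring

theorem gaussianPdf_mul_transpose_mulVec {S : Matrix (Fin p) (Fin p) ℝ} (hS : S.det ≠ 0)
    (z : Fin p → ℝ) :
    gaussianPdf (S * Sᵀ) 0 (S *ᵥ z) = |S.det|⁻¹ * ∏ m, gaussianPDFReal 0 1 (z m) := by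
  have hSinv : Sᵀ * (S * Sᵀ)⁻¹ * S = 1 := by
    rw [Matrix.mul_inv_rev, ← Matrix.mul_assoc, mul_nonsing_inv _ (by simpa using hS),
      Matrix.one_mul, nonsing_inv_mul _ (isUnit_iff_ne_zero.mpr hS)]
  have hdet : (S * Sᵀ).det ^ (-(1 : ℝ) / 2) = |S.det|⁻¹ := by
    rw [det_mul, det_transpose, ← sq, ← sq_abs, ← rpow_natCast, ← rpow_mul (abs_nonneg _)]
    norm_num [rpow_neg_one]
  rw [gaussianPdf, sub_zero, mulVec_dotProduct_mulVec_mulVec, hSinv, one_mulVec, hdet,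
    prod_gaussianPDFReal_zero_one, Fintype.card_fin]
  ring

theorem integral_gaussianPdf_mul_transpose_mul_dotProduct_mulVec_mul
    {S : Matrix (Fin p) (Fin p) ℝ} (hS : S.det ≠ 0) (μ : Fin p → ℝ)
    (A B : Matrix (Fin p) (Fin p) ℝ) :
    ∫ y, gaussianPdf (S * Sᵀ) μ y * (((y - μ) ⬝ᵥ A *ᵥ (y - μ)) * ((y - μ) ⬝ᵥ B *ᵥ (y - μ))) =
      (Sᵀ * A * S).trace * (Sᵀ * B * S).trace + (Sᵀ * A * S * (Sᵀ * B * S)ᵀ).trace +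
        (Sᵀ * A * S * (Sᵀ * B * S)).trace := by
  let g (x : Fin p → ℝ) := gaussianPdf (S * Sᵀ) 0 x * ((x ⬝ᵥ A *ᵥ x) * (x ⬝ᵥ B *ᵥ x))
  have hg (z : Fin p → ℝ) : g (S *ᵥ z) = |S.det|⁻¹ * ((∏ m, gaussianPDFReal 0 1 (z m)) *
      ((z ⬝ᵥ (Sᵀ * A * S) *ᵥ z) * (z ⬝ᵥ (Sᵀ * B * S) *ᵥ z))) := by
    simp only [g, gaussianPdf_mul_transpose_mulVec hS, mulVec_dotProduct_mulVec_mulVec, mul_assoc]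
  have hS' : |S.det| ≠ 0 := abs_ne_zero.mpr hS
  calc _ = ∫ x, g (x - μ) := by simp only [g, gaussianPdf_eq_sub _ μ]
    _ = ∫ x, g x := integral_sub_right_eq_self g μ
    _ = |S.det| * ∫ z, g (S *ᵥ z) := by
      rw [integral_comp_mulVec hS, ← mul_assoc, mul_inv_cancel₀ hS', one_mul]
    _ = _ := by
      rw [funext hg, integral_const_mul, ← mul_assoc, mul_inv_cancel₀ hS', one_mul,
        integral_prod_gaussianPDFReal_mul_dotProduct_mulVec_mul]

theorem integral_gaussianPdf_mul_dotProduct_mulVec_mul {W : Matrix (Fin p) (Fin p) ℝ}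
    (hW : W.PosDef) (μ : Fin p → ℝ) (A B : Matrix (Fin p) (Fin p) ℝ) :
    ∫ y, gaussianPdf W μ y * (((y - μ) ⬝ᵥ A *ᵥ (y - μ)) * ((y - μ) ⬝ᵥ B *ᵥ (y - μ))) =
      (W * A).trace * (W * B).trace + (W * A * W * Bᵀ).trace + (W * A * W * B).trace := by
  obtain ⟨S, hS, rfl⟩ := hW.exists_mul_transpose_eq
  have hcycle (X : Matrix (Fin p) (Fin p) ℝ) : (Sᵀ * X * S).trace = (S * Sᵀ * X).trace :=
    trace_mul_cycle _ _ _
  have hAB : Sᵀ * A * S * (Sᵀ * B * S) = Sᵀ * (A * (S * Sᵀ) * B) * S := by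
    simp only [Matrix.mul_assoc]
  have hABt : Sᵀ * A * S * (Sᵀ * B * S)ᵀ = Sᵀ * (A * (S * Sᵀ) * Bᵀ) * S := by
    simp only [transpose_mul, transpose_transpose, Matrix.mul_assoc]
  rw [integral_gaussianPdf_mul_transpose_mul_dotProduct_mulVec_mul hS, hAB, hABt, hcycle, hcycle,
    hcycle, hcycle]
  simp only [Matrix.mul_assoc]

end GaussianPdf

theorem integral_gaussianPdf_rpow_fourthMoment_general {p : ℕ}
    (V : Matrix (Fin p) (Fin p) ℝ) (hVpd : V.PosDef)
    (μ : Fin p → ℝ) (α : ℝ) (hα : 0 ≤ α)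
    (A B : Matrix (Fin p) (Fin p) ℝ) (hBsymm : B.IsSymm) :
    ∫ y : Fin p → ℝ,
        gaussianPdf V μ y ^ (1 + α) *
          (((y - μ) ⬝ᵥ (A *ᵥ (y - μ))) * ((y - μ) ⬝ᵥ (B *ᵥ (y - μ)))) =
      (2 * Real.pi) ^ (-(p : ℝ) * α / 2) * V.det ^ (-α / 2) *
        (1 + α) ^ (-(p : ℝ) / 2 - 2) *
        ((V * A).trace * (V * B).trace + 2 * (V * A * V * B).trace) := by
  have hβ : 0 < 1 + α := by linarith
  simp only [gaussianPdf_rpow hVpd μ _ hβ, add_sub_cancel_left, mul_assoc, integral_const_mul,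
    integral_gaussianPdf_mul_dotProduct_mulVec_mul (hVpd.smul (inv_pos.2 hβ)), hBsymm.eq]
  simp only [smul_mul_assoc, mul_smul_comm, trace_smul, smul_eq_mul, smul_smul]
  rw [rpow_sub hβ, rpow_two]
  field_simp
  ring

/-- for symmetric `A, B` (Isserlis-type fourth moment identity),
`∫ φ_{μ,V}(y)^{1+α} [(y−μ)ᵀA(y−μ)][(y−μ)ᵀB(y−μ)] dy`
`  = (2π)^{−pα/2}(det V)^{−α/2}(1+α)^{−p/2−2} [Tr(VA)Tr(VB) + 2Tr(VAVB)]`. -/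
theorem integral_gaussianPdf_rpow_fourthMoment {p : ℕ}
    (V : Matrix (Fin p) (Fin p) ℝ) (hVsymm : V.IsSymm) (hVpd : V.PosDef)
    (μ : Fin p → ℝ) (α : ℝ) (hα : 0 ≤ α)
    (A B : Matrix (Fin p) (Fin p) ℝ) (hAsymm : A.IsSymm) (hBsymm : B.IsSymm) :
    ∫ y : Fin p → ℝ,
        gaussianPdf V μ y ^ (1 + α) *
          (((y - μ) ⬝ᵥ (A *ᵥ (y - μ))) * ((y - μ) ⬝ᵥ (B *ᵥ (y - μ)))) =
      (2 * Real.pi) ^ (-(p : ℝ) * α / 2) * V.det ^ (-α / 2) *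
        (1 + α) ^ (-(p : ℝ) / 2 - 2) *
        ((V * A).trace * (V * B).trace + 2 * (V * A * V * B).trace) :=
  integral_gaussianPdf_rpow_fourthMoment_general V hVpd μ α hα A B hBsymm
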